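/- Let N be a positive integer, let u, u_l, u_ν : Fin N → ℂ with ‖u‖² ≠ 0, let α ∈ ℂ, and let N₀ > 0. Define the real 2×2 matrices J_θθ = (2|α|²/N₀) · [[‖u_l‖², Re⟨u_l, u_ν⟩], [Re⟨u_l, u_ν⟩, ‖u_ν‖²]], J_κκ = (2/N₀)·‖u‖²·I₂, and J_θκ = (2/N₀) · [[Re(α̅·⟨u_l, u⟩), Im(α̅·⟨u_l, u⟩)], [Re(α̅·⟨u_ν, u⟩), Im(α̅·⟨u_ν, u⟩)]], with J_κθ = J_θκᵀ. Define Φ_l = ‖u_l‖² − |⟨u_l, u⟩|²/‖u‖², Φ_ν = ‖u_ν‖² − |⟨u_ν, u⟩|²/‖u‖², and Ξ = Re⟨u_l, u_ν⟩ − Re( ⟨u_l, u⟩ · ⟨u, u_ν⟩ ) / ‖u‖². Then the Schur complement satisfies J_θθ − J_θκ · J_κκ⁻¹ · J_κθ = (2|α|²/N₀) · [[Φ_l, Ξ], [Ξ, Φ_ν]]. -/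
import Mathlib


open Complex Matrix

/-- Standard complex inner product on `ℂ^N`, conjugate-linear in the first
argument: `⟨a, b⟩ = Σ_k conj (a k) * b k`. -/
noncomputable def cip {N : ℕ} (a b : Fin N → ℂ) : ℂ :=
  ∑ k : Fin N, (starRingEnd ℂ) (a k) * b k

/-- Squared norm `‖a‖² = ⟨a, a⟩ = Σ_k |a k|²` on `ℂ^N`. -/
noncomputable def nsq {N : ℕ} (a : Fin N → ℂ) : ℝ :=
  ∑ k : Fin N, Complex.normSq (a k)

lemma cip_conj {N : ℕ} (a b : Fin N → ℂ) :
    cip a b = (starRingEnd ℂ) (cip b a) := by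
  simp [cip, Finset.sum_congr, map_sum]
  exact Finset.sum_congr rfl fun k _ => by ring

theorem fim_schur_complement
    (N : ℕ) (hN : 0 < N) (u ul uν : Fin N → ℂ) (hu : nsq u ≠ 0)
    (α : ℂ) (N₀ : ℝ) (hN₀ : 0 < N₀)
    (Jθθ Jκκ Jθκ : Matrix (Fin 2) (Fin 2) ℝ)
    (hJθθ : Jθθ = (2 * Complex.normSq α / N₀) •
      !![nsq ul, (cip ul uν).re; (cip ul uν).re, nsq uν])
    (hJκκ : Jκκ = ((2 / N₀) * nsq u) • (1 : Matrix (Fin 2) (Fin 2) ℝ))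
    (hJθκ : Jθκ = (2 / N₀) •
      !![((starRingEnd ℂ) α * cip ul u).re, ((starRingEnd ℂ) α * cip ul u).im;
         ((starRingEnd ℂ) α * cip uν u).re, ((starRingEnd ℂ) α * cip uν u).im])
    (Φl Φν Ξ : ℝ)
    (hΦl : Φl = nsq ul - Complex.normSq (cip ul u) / nsq u)
    (hΦν : Φν = nsq uν - Complex.normSq (cip uν u) / nsq u)
    (hΞ : Ξ = (cip ul uν).re - (cip ul u * cip u uν).re / nsq u) :
    Jθθ - Jθκ * Jκκ⁻¹ * Jθκᵀ
      = (2 * Complex.normSq α / N₀) • !![Φl, Ξ; Ξ, Φν] := by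
  have hc : ((2 / N₀) * nsq u) ≠ 0 := by
    have : (2 : ℝ) / N₀ ≠ 0 := by positivity
    exact mul_ne_zero this hu
  have hinv : Jκκ⁻¹ = ((2 / N₀) * nsq u)⁻¹ • (1 : Matrix (Fin 2) (Fin 2) ℝ) := by
    rw [hJκκ]
    apply inv_eq_right_inv
    rw [smul_mul_smul_comm, one_mul, mul_inv_cancel₀ hc, one_smul]
  have huν : cip u uν = (starRingEnd ℂ) (cip uν u) := cip_conj u uν
  set a := cip ul u with ha
  set b := cip uν u with hb
  set m := cip ul uν with hm
  set s := nsq u with hs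
  subst hJθθ hJθκ hΦl hΦν hΞ
  rw [hinv, huν, Matrix.mul_smul, Matrix.mul_one, Matrix.smul_mul, Matrix.smul_mul,
    Matrix.transpose_smul, Matrix.mul_smul]
  ext i j
  fin_cases i <;> fin_cases j <;>
    · simp only [Matrix.smul_apply, Matrix.mul_apply, Fin.sum_univ_two,
        Matrix.transpose_apply, Matrix.sub_apply, smul_eq_mul]
      norm_num [Matrix.cons_val_zero, Matrix.cons_val_one, Matrix.head_cons,
        Complex.normSq_apply, Complex.mul_re, Complex.mul_im, Complex.conj_re,
        Complex.conj_im]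
      field_simp
      ring
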